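/- Let a, b > 0, γ = b/a, μ ∈ ℝ, and ξ_r, η_r ∈ {−1, 1}. In dimensionless coordinates (ξ, η), define ψ_r = (1+ξ_r ξ)(1+η_r η)/4, f_r = −(ξ_r η_r/8)·((μ/γ)ξ² + γη² − μ/γ − γ), and g_r = −(ξ_r η_r/8)·((1/γ)ξ² + μγη² − 1/γ − μγ), and consider the incompatible-element displacement contribution of node r with nodal values (v^x, v^y): u_x = ψ_r v^x + f_r v^y, u_y = g_r v^x + ψ_r v^y, where the physical coordinates are x = x_c + (a/2)ξ, y = y_c + (b/2)η. Then the strain vector (∂u_x/∂x, ∂u_y/∂y, ∂u_y/∂x + ∂u_x/∂y) equals β_r^{inc}(ξ,η)·(v^x, v^y)ᵀ with β_r^{inc}(ξ,η) = (1/2)·[[ξ_r(1+η_r η)/a, −μ ξ_r η_r ξ/b], [−μ ξ_r η_r η/a, η_r(1+ξ_r ξ)/b], [η_r/b, ξ_r/a]]; in particular the shear-strain row is constant in (ξ, η): ∂g_r/∂x + ∂ψ_r/∂y = η_r/(2b) and ∂ψ_r/∂x + ∂f_r/∂y = ξ_r/(2a). -/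

import Mathlib

open Matrix

/-- Bilinear shape function of node r in dimensionless coordinates. -/
noncomputable def psiB (ξr ηr ξ η : ℝ) : ℝ :=
  (1 + ξr * ξ) * (1 + ηr * η) / 4

/-- Incompatible quadratic correction mode `f_r`. -/
noncomputable def fInc (γ μ ξr ηr ξ η : ℝ) : ℝ :=
  -(ξr * ηr / 8) * ((μ / γ) * ξ ^ 2 + γ * η ^ 2 - μ / γ - γ)

/-- Incompatible quadratic correction mode `g_r`. -/
noncomputable def gInc (γ μ ξr ηr ξ η : ℝ) : ℝ :=
  -(ξr * ηr / 8) * ((1 / γ) * ξ ^ 2 + μ * γ * η ^ 2 - 1 / γ - μ * γ)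

/-- Strain–displacement matrix of the incompatible bilinear rectangular element. -/
noncomputable def betaInc (a b μ ξr ηr ξ η : ℝ) : Matrix (Fin 3) (Fin 2) ℝ :=
  (1 / 2 : ℝ) • !![ξr * (1 + ηr * η) / a, -(μ * ξr * ηr * ξ) / b;
                   -(μ * ξr * ηr * η) / a, ηr * (1 + ξr * ξ) / b;
                   ηr / b, ξr / a]

/-!
Each mode is a quadratic in the dimensionless coordinates, differentiated there and then
rescaled by the chain rule through `ξ = 2 (x - x_c) / a`, `η = 2 (y - y_c) / b`. With `γ = b / a`
the factors `1 / γ` and `γ` produced by the incompatible modes cancel the mismatched scale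
factors `2 / a` and `2 / b`; in the shear row the `ξ`- and `η`-dependent parts of `∂ψ_r` and the
incompatible modes cancel exactly, leaving constants.
-/

theorem hasDerivAt_rescale (c d x : ℝ) :
    HasDerivAt (fun t : ℝ => 2 * (t - c) / d) (2 / d) x := by
  simpa using (((hasDerivAt_id x).sub_const c).const_mul 2).div_const d

theorem HasDerivAt.comp_rescale {φ : ℝ → ℝ} {φ' c d x : ℝ}
    (h : HasDerivAt φ φ' (2 * (x - c) / d)) :
    HasDerivAt (fun t => φ (2 * (t - c) / d)) (φ' * (2 / d)) x :=
  h.comp x (hasDerivAt_rescale c d x)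

theorem hasDerivAt_quadratic (A B C t : ℝ) :
    HasDerivAt (fun s => A + B * s + C * s ^ 2) (B + 2 * C * t) t := by
  refine ((((hasDerivAt_id t).const_mul B).const_add A).add
    ((hasDerivAt_pow 2 t).const_mul C)).congr_deriv ?_
  norm_num; ring

section Dimensionless

variable (γ μ ξr ηr ξ η : ℝ)

theorem hasDerivAt_psiB_fst :
    HasDerivAt (fun ξ => psiB ξr ηr ξ η) (ξr * (1 + ηr * η) / 4) ξ := by
  convert hasDerivAt_quadratic (psiB ξr ηr 0 η) (ξr * (1 + ηr * η) / 4) 0 ξ using 1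
  · funext s; unfold psiB; ring
  · ring

theorem hasDerivAt_psiB_snd :
    HasDerivAt (fun η => psiB ξr ηr ξ η) (ηr * (1 + ξr * ξ) / 4) η := by
  convert hasDerivAt_quadratic (psiB ξr ηr ξ 0) (ηr * (1 + ξr * ξ) / 4) 0 η using 1
  · funext s; unfold psiB; ring
  · ring

theorem hasDerivAt_fInc_fst :
    HasDerivAt (fun ξ => fInc γ μ ξr ηr ξ η) (-(ξr * ηr * μ * ξ) / (4 * γ)) ξ := by
  convert hasDerivAt_quadratic (fInc γ μ ξr ηr 0 η) 0 (-(ξr * ηr * μ) / (8 * γ)) ξ using 1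
  · funext s; unfold fInc; ring
  · ring

theorem hasDerivAt_fInc_snd :
    HasDerivAt (fun η => fInc γ μ ξr ηr ξ η) (-(ξr * ηr * γ * η) / 4) η := by
  convert hasDerivAt_quadratic (fInc γ μ ξr ηr ξ 0) 0 (-(ξr * ηr * γ) / 8) η using 1
  · funext s; unfold fInc; ring
  · ring

theorem hasDerivAt_gInc_fst :
    HasDerivAt (fun ξ => gInc γ μ ξr ηr ξ η) (-(ξr * ηr * ξ) / (4 * γ)) ξ := by
  convert hasDerivAt_quadratic (gInc γ μ ξr ηr 0 η) 0 (-(ξr * ηr) / (8 * γ)) ξ using 1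
  · funext s; unfold gInc; ring
  · ring

theorem hasDerivAt_gInc_snd :
    HasDerivAt (fun η => gInc γ μ ξr ηr ξ η) (-(μ * ξr * ηr * γ * η) / 4) η := by
  convert hasDerivAt_quadratic (gInc γ μ ξr ηr ξ 0) 0 (-(μ * ξr * ηr * γ) / 8) η using 1
  · funext s; unfold gInc; ring
  · ring

end Dimensionless

section Physical

variable (a b μ ξr ηr xc yc x y : ℝ)

theorem hasDerivAt_psiB_x (η : ℝ) :
    HasDerivAt (fun x' => psiB ξr ηr (2 * (x' - xc) / a) η) (ξr * (1 + ηr * η) / (2 * a)) x :=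
  (hasDerivAt_psiB_fst ξr ηr _ η).comp_rescale.congr_deriv (by ring)

theorem hasDerivAt_psiB_y (ξ : ℝ) :
    HasDerivAt (fun y' => psiB ξr ηr ξ (2 * (y' - yc) / b)) (ηr * (1 + ξr * ξ) / (2 * b)) y :=
  (hasDerivAt_psiB_snd ξr ηr ξ _).comp_rescale.congr_deriv (by ring)

theorem hasDerivAt_fInc_x (ha : a ≠ 0) (η : ℝ) :
    HasDerivAt (fun x' => fInc (b / a) μ ξr ηr (2 * (x' - xc) / a) η)
      (-(μ * ξr * ηr * (2 * (x - xc) / a)) / (2 * b)) x :=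
  (hasDerivAt_fInc_fst _ μ ξr ηr _ η).comp_rescale.congr_deriv (by field_simp; ring)

theorem hasDerivAt_fInc_y (hb : b ≠ 0) (ξ : ℝ) :
    HasDerivAt (fun y' => fInc (b / a) μ ξr ηr ξ (2 * (y' - yc) / b))
      (-(ξr * ηr * (2 * (y - yc) / b)) / (2 * a)) y :=
  (hasDerivAt_fInc_snd _ μ ξr ηr ξ _).comp_rescale.congr_deriv (by field_simp; ring)

theorem hasDerivAt_gInc_x (ha : a ≠ 0) (η : ℝ) :
    HasDerivAt (fun x' => gInc (b / a) μ ξr ηr (2 * (x' - xc) / a) η)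
      (-(ξr * ηr * (2 * (x - xc) / a)) / (2 * b)) x :=
  (hasDerivAt_gInc_fst _ μ ξr ηr _ η).comp_rescale.congr_deriv (by field_simp; ring)

theorem hasDerivAt_gInc_y (hb : b ≠ 0) (ξ : ℝ) :
    HasDerivAt (fun y' => gInc (b / a) μ ξr ηr ξ (2 * (y' - yc) / b))
      (-(μ * ξr * ηr * (2 * (y - yc) / b)) / (2 * a)) y :=
  (hasDerivAt_gInc_snd _ μ ξr ηr ξ _).comp_rescale.congr_deriv (by field_simp; ring)

end Physical

theorem incompatible_element_strain_displacement_general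
    (a b xc yc γ μ ξr ηr vx vy : ℝ)
    (ha : 0 < a) (hb : 0 < b) (hγ : γ = b / a)
    (Ux Uy : ℝ → ℝ → ℝ)
    (hUx : Ux = fun x y =>
      psiB ξr ηr (2 * (x - xc) / a) (2 * (y - yc) / b) * vx +
        fInc γ μ ξr ηr (2 * (x - xc) / a) (2 * (y - yc) / b) * vy)
    (hUy : Uy = fun x y =>
      gInc γ μ ξr ηr (2 * (x - xc) / a) (2 * (y - yc) / b) * vx +
        psiB ξr ηr (2 * (x - xc) / a) (2 * (y - yc) / b) * vy) :
    ∀ x y : ℝ,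
      (![deriv (fun x' => Ux x' y) x,
         deriv (fun y' => Uy x y') y,
         deriv (fun x' => Uy x' y) x + deriv (fun y' => Ux x y') y] =
        (betaInc a b μ ξr ηr (2 * (x - xc) / a) (2 * (y - yc) / b)).mulVec
          ![vx, vy]) ∧
      deriv (fun x' => gInc γ μ ξr ηr (2 * (x' - xc) / a) (2 * (y - yc) / b)) x +
          deriv (fun y' => psiB ξr ηr (2 * (x - xc) / a) (2 * (y' - yc) / b)) y =
        ηr / (2 * b) ∧
      deriv (fun x' => psiB ξr ηr (2 * (x' - xc) / a) (2 * (y - yc) / b)) x +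
          deriv (fun y' => fInc γ μ ξr ηr (2 * (x - xc) / a) (2 * (y' - yc) / b)) y =
        ξr / (2 * a) := by
  subst hUx hUy hγ
  intro x y
  beta_reduce
  have ψx := hasDerivAt_psiB_x a ξr ηr xc x (2 * (y - yc) / b)
  have ψy := hasDerivAt_psiB_y b ξr ηr yc y (2 * (x - xc) / a)
  have fx := hasDerivAt_fInc_x a b μ ξr ηr xc x ha.ne' (2 * (y - yc) / b)
  have fy := hasDerivAt_fInc_y a b μ ξr ηr yc y hb.ne' (2 * (x - xc) / a)
  have gx := hasDerivAt_gInc_x a b μ ξr ηr xc x ha.ne' (2 * (y - yc) / b)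
  have gy := hasDerivAt_gInc_y a b μ ξr ηr yc y hb.ne' (2 * (x - xc) / a)
  refine ⟨?_, by rw [gx.deriv, ψy.deriv]; ring,
    by rw [ψx.deriv, fy.deriv]; ring⟩
  rw [((ψx.mul_const vx).fun_add (fx.mul_const vy)).deriv,
    ((gy.mul_const vx).fun_add (ψy.mul_const vy)).deriv,
    ((gx.mul_const vx).fun_add (ψx.mul_const vy)).deriv,
    ((ψy.mul_const vx).fun_add (fy.mul_const vy)).deriv]
  ext i
  fin_cases i <;>
    simp only [Fin.zero_eta, Fin.mk_one, Fin.reduceFinMk, Fin.isValue, cons_val, cons_val_zero,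
      cons_val_one, cons_val', cons_val_fin_one, betaInc, mulVec, dotProduct, Fin.sum_univ_two,
      Matrix.smul_apply, of_apply, smul_eq_mul] <;>
    ring

theorem incompatible_element_strain_displacement
    (a b xc yc γ μ ξr ηr vx vy : ℝ)
    (ha : 0 < a) (hb : 0 < b) (hγ : γ = b / a)
    (hξr : ξr = -1 ∨ ξr = 1) (hηr : ηr = -1 ∨ ηr = 1)
    (Ux Uy : ℝ → ℝ → ℝ)
    (hUx : Ux = fun x y =>
      psiB ξr ηr (2 * (x - xc) / a) (2 * (y - yc) / b) * vx +
        fInc γ μ ξr ηr (2 * (x - xc) / a) (2 * (y - yc) / b) * vy)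
    (hUy : Uy = fun x y =>
      gInc γ μ ξr ηr (2 * (x - xc) / a) (2 * (y - yc) / b) * vx +
        psiB ξr ηr (2 * (x - xc) / a) (2 * (y - yc) / b) * vy) :
    ∀ x y : ℝ,
      (![deriv (fun x' => Ux x' y) x,
         deriv (fun y' => Uy x y') y,
         deriv (fun x' => Uy x' y) x + deriv (fun y' => Ux x y') y] =
        (betaInc a b μ ξr ηr (2 * (x - xc) / a) (2 * (y - yc) / b)).mulVec
          ![vx, vy]) ∧
      deriv (fun x' => gInc γ μ ξr ηr (2 * (x' - xc) / a) (2 * (y - yc) / b)) x +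
          deriv (fun y' => psiB ξr ηr (2 * (x - xc) / a) (2 * (y' - yc) / b)) y =
        ηr / (2 * b) ∧
      deriv (fun x' => psiB ξr ηr (2 * (x' - xc) / a) (2 * (y - yc) / b)) x +
          deriv (fun y' => fInc γ μ ξr ηr (2 * (x - xc) / a) (2 * (y' - yc) / b)) y =
        ξr / (2 * a) :=
  incompatible_element_strain_displacement_general a b xc yc γ μ ξr ηr vx vy ha hb hγ Ux Uy hUx hUy
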